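/- If 2 ≤ n ≤ r + 1, then the corona K_n ∘ \overline{K_r} admits a d-lucky labeling using only the labels {1, 2}; that is, η_dl(K_n ∘ \overline{K_r}) ≤ 2. -/
import Mathlib


attribute [local instance] Classical.propDecidable

/-- The d-lucky sum of a vertex `u`. -/
noncomputable def dLuckySum {V : Type*} [Fintype V] (G : SimpleGraph V) (ℓ : V → ℕ)
    (u : V) : ℕ :=
  G.degree u + ∑ v ∈ G.neighborFinset u, ℓ v

/-- A labeling is d-lucky if adjacent vertices have distinct d-lucky sums. -/
def IsDLuckyLabeling {V : Type*} [Fintype V] (G : SimpleGraph V) (ℓ : V → ℕ) : Prop :=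
  ∀ ⦃u v : V⦄, G.Adj u v → dLuckySum G ℓ u ≠ dLuckySum G ℓ v

/-- The d-lucky number: the least positive integer `k` such that `G` admits a
d-lucky labeling with labels in `{1, …, k}`. -/
noncomputable def dLuckyNumber {V : Type*} [Fintype V] (G : SimpleGraph V) : ℕ :=
  sInf {k : ℕ | 0 < k ∧ ∃ ℓ : V → ℕ, (∀ v : V, 1 ≤ ℓ v ∧ ℓ v ≤ k) ∧ IsDLuckyLabeling G ℓ}

/-- Generating relation for the corona `Kₙ ∘ (complement of K_r)`:
`Sum.inl i` is vertex `vᵢ` of the complete graph `Kₙ`, and `Sum.inr (i, a)`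
is the pendant vertex `p_{i,a}` attached to `vᵢ`. -/
def coronaRel (n r : ℕ) : (Fin n ⊕ Fin n × Fin r) → (Fin n ⊕ Fin n × Fin r) → Prop
  | Sum.inl _, Sum.inl _ => True
  | Sum.inl i, Sum.inr p => p.1 = i
  | _, _ => False

/-- The corona `Kₙ ∘ (complement of K_r)`: the vertices `v₁, …, vₙ` are pairwise
adjacent, each pendant vertex `p_{i,a}` is adjacent exactly to `vᵢ`, and there
are no other edges. -/
def corona (n r : ℕ) : SimpleGraph (Fin n ⊕ Fin n × Fin r) :=
  SimpleGraph.fromRel (coronaRel n r)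

lemma dLuckySum_eq {V : Type*} [Fintype V] (G : SimpleGraph V) (ℓ : V → ℕ) (u : V) :
    dLuckySum G ℓ u = ∑ v : V, if G.Adj u v then (1 + ℓ v) else 0 := by
  classical
  rw [dLuckySum, SimpleGraph.degree, Finset.card_eq_sum_ones, ← Finset.sum_add_distrib,
    ← Finset.sum_filter]
  congr 1
  ext v
  simp [SimpleGraph.mem_neighborFinset]

lemma corona_adj {n r : ℕ} (u v : Fin n ⊕ Fin n × Fin r) :
    (corona n r).Adj u v ↔ u ≠ v ∧ (coronaRel n r u v ∨ coronaRel n r v u) := by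
  simp [corona, SimpleGraph.fromRel_adj]

lemma corona_adj_ll {n r : ℕ} (i j : Fin n) :
    (corona n r).Adj (Sum.inl i) (Sum.inl j) ↔ i ≠ j := by
  simp [corona_adj, coronaRel]

lemma corona_adj_lr {n r : ℕ} (i : Fin n) (p : Fin n × Fin r) :
    (corona n r).Adj (Sum.inl i) (Sum.inr p) ↔ p.1 = i := by
  simp [corona_adj, coronaRel]

lemma corona_adj_rl {n r : ℕ} (i : Fin n) (p : Fin n × Fin r) :
    (corona n r).Adj (Sum.inr p) (Sum.inl i) ↔ p.1 = i := by
  simp [corona_adj, coronaRel]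

lemma corona_adj_rr {n r : ℕ} (p q : Fin n × Fin r) :
    ¬ (corona n r).Adj (Sum.inr p) (Sum.inr q) := by
  simp [corona_adj, coronaRel]

lemma sum_ite_lt_fin (r k : ℕ) :
    (∑ a : Fin r, if (a : ℕ) < k then (1 : ℕ) else 0) = min k r := by
  rw [Fin.sum_univ_eq_sum_range (fun x => if x < k then (1 : ℕ) else 0)]
  rw [← Finset.sum_filter]
  have h : (Finset.range r).filter (fun x => x < k) = Finset.range (min k r) := by
    ext x; simp [Nat.lt_min, and_comm]
  rw [h]
  simp

theorem dLuckyNumber_corona_le_two (n r : ℕ) (hn : 2 ≤ n) (hnr : n ≤ r + 1) :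
    (∃ ℓ : (Fin n ⊕ Fin n × Fin r) → ℕ,
      (∀ v, ℓ v = 1 ∨ ℓ v = 2) ∧ IsDLuckyLabeling (corona n r) ℓ) ∧
    dLuckyNumber (corona n r) ≤ 2 := by
  classical
  set ℓ : (Fin n ⊕ Fin n × Fin r) → ℕ := fun v =>
    match v with
    | Sum.inl _ => 1
    | Sum.inr (i, a) => if (a : ℕ) < (i : ℕ) then 2 else 1 with hℓ
  have hrange : ∀ v, ℓ v = 1 ∨ ℓ v = 2 := by
    rintro (i | ⟨i, a⟩)
    · left; rfl
    · simp only [hℓ]; split <;> simp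
  -- sum at a hub vertex
  have hub : ∀ i : Fin n, dLuckySum (corona n r) ℓ (Sum.inl i)
      = 2 * (n - 1) + 2 * r + i := by
    intro i
    rw [dLuckySum_eq, Fintype.sum_sum_type]
    have h1 : (∑ j : Fin n, if (corona n r).Adj (Sum.inl i) (Sum.inl j)
        then (1 + ℓ (Sum.inl j)) else 0) = 2 * (n - 1) := by
      simp only [corona_adj_ll]
      rw [← Finset.sum_filter]
      have h : (Finset.univ.filter (fun j : Fin n => i ≠ j)) = Finset.univ.erase i := by
        ext j; simp [ne_comm, eq_comm]
      rw [h]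
      have : ∀ j ∈ Finset.univ.erase i, 1 + ℓ (Sum.inl j) = 2 := fun _ _ => rfl
      rw [Finset.sum_congr rfl this, Finset.sum_const,
        Finset.card_erase_of_mem (Finset.mem_univ i)]
      simp [mul_comm]
    have h2 : (∑ p : Fin n × Fin r, if (corona n r).Adj (Sum.inl i) (Sum.inr p)
        then (1 + ℓ (Sum.inr p)) else 0) = 2 * r + i := by
      simp only [corona_adj_lr]
      rw [Fintype.sum_prod_type]
      have hstep : ∀ j : Fin n, (∑ a : Fin r, if ((j, a).1 = i)
          then (1 + ℓ (Sum.inr (j, a))) else 0)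
          = if j = i then (∑ a : Fin r, (1 + ℓ (Sum.inr (j, a)))) else 0 := by
        intro j
        by_cases h : j = i <;> simp [h]
      rw [Finset.sum_congr rfl (fun j _ => hstep j), Finset.sum_ite_eq']
      simp only [Finset.mem_univ, if_true]
      have h3 : (∑ a : Fin r, (1 + ℓ (Sum.inr (i, a))))
          = ∑ a : Fin r, (2 + if (a : ℕ) < (i : ℕ) then 1 else 0) := by
        apply Finset.sum_congr rfl
        intro a _
        simp only [hℓ]
        split <;> omega
      rw [h3, Finset.sum_add_distrib, sum_ite_lt_fin, Finset.sum_const]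
      have hi : (i : ℕ) ≤ r := by have := i.isLt; omega
      simp [min_eq_left hi, mul_comm]
    rw [h1, h2, Nat.add_assoc]
  -- sum at a pendant vertex
  have pend : ∀ p : Fin n × Fin r, dLuckySum (corona n r) ℓ (Sum.inr p) = 2 := by
    intro p
    rw [dLuckySum_eq, Fintype.sum_sum_type]
    have h1 : (∑ j : Fin n, if (corona n r).Adj (Sum.inr p) (Sum.inl j)
        then (1 + ℓ (Sum.inl j)) else 0) = 2 := by
      simp only [corona_adj_rl]
      rw [Finset.sum_ite_eq Finset.univ p.1 (fun j => 1 + ℓ (Sum.inl j))]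
      simp [hℓ]
    have h2 : (∑ q : Fin n × Fin r, if (corona n r).Adj (Sum.inr p) (Sum.inr q)
        then (1 + ℓ (Sum.inr q)) else 0) = 0 := by
      simp [corona_adj_rr]
    rw [h1, h2]
  have hlab : IsDLuckyLabeling (corona n r) ℓ := by
    rintro (i | p) (j | q) hadj
    · rw [hub, hub]
      rw [corona_adj_ll] at hadj
      have : (i : ℕ) ≠ (j : ℕ) := fun h => hadj (Fin.ext h)
      omega
    · rw [hub, pend]
      have h2 : 2 ≤ 2 * (n - 1) := by omega
      have hr : 1 ≤ r := by omega
      omega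
    · rw [pend, hub]
      have h2 : 2 ≤ 2 * (n - 1) := by omega
      have hr : 1 ≤ r := by omega
      omega
    · exact absurd hadj (corona_adj_rr p q)
  refine ⟨⟨ℓ, hrange, hlab⟩, ?_⟩
  apply Nat.sInf_le
  exact ⟨by norm_num, ℓ, fun v => by rcases hrange v with h | h <;> omega, hlab⟩
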